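/- arXiv:2302.10308 — 3 statements merged into one kernel-verified Lean document; each statement's English description precedes it below -/
import Mathlib

section
/- Composition of supermodular with max: if f, g : 2^V × F(D) → ℝ are hybrid monotone nonincreasing and hybrid supermodular and c ∈ ℝ, then (S, Λ) ↦ max{f(S, Λ) + g(S, Λ) − c, 0} is hybrid monotone nonincreasing and hybrid supermodular. -/
/-- `f : 2^V × F(D) → ℝ` is hybrid monotone nonincreasing. -/
def HybMonoDecr {V : Type*} [DecidableEq V] {n : ℕ} [DecidableEq (Fin n → ℝ)]
    (D : Set (Fin n → ℝ)) (f : Finset V → Finset (Fin n → ℝ) → ℝ) : Prop :=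
  ∀ (S T : Finset V) (L L' : Finset (Fin n → ℝ)),
    S ⊆ T → L ⊆ L' → ↑L' ⊆ D → f T L' ≤ f S L

/-- `f : 2^V × F(D) → ℝ` is hybrid supermodular (i.e. `-f` is hybrid submodular). -/
def HybSuper {V : Type*} [DecidableEq V] {n : ℕ} [DecidableEq (Fin n → ℝ)]
    (D : Set (Fin n → ℝ)) (f : Finset V → Finset (Fin n → ℝ) → ℝ) : Prop :=
  (∀ (S T : Finset V) (L L' : Finset (Fin n → ℝ)) (j : V),
    S ⊆ T → L ⊆ L' → ↑L' ⊆ D → j ∉ T →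
    f (insert j S) L - f S L ≤ f (insert j T) L' - f T L') ∧
  (∀ (S T : Finset V) (L L' : Finset (Fin n → ℝ)) (lam : Fin n → ℝ),
    S ⊆ T → L ⊆ L' → ↑L' ⊆ D → lam ∈ D → lam ∉ L' →
    f S (insert lam L) - f S L ≤ f T (insert lam L') - f T L')

lemma key_max (a0 a1 b0 b1 c : ℝ) (hb0 : b0 ≤ a0) (hb1 : b1 ≤ a1)
    (ha : a1 ≤ a0) (hb : b1 ≤ b0) (hmar : a1 - a0 ≤ b1 - b0) :
    max (a1 - c) 0 - max (a0 - c) 0 ≤ max (b1 - c) 0 - max (b0 - c) 0 := by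
  rcases le_total (a1 - c) 0 with h | h <;> rcases le_total (b0 - c) 0 with h' | h' <;>
    rcases le_total (a0 - c) 0 with h'' | h'' <;> rcases le_total (b1 - c) 0 with h''' | h''' <;>
    simp_all [max_eq_left, max_eq_right] <;> linarith

/-- If `f`, `g` are hybrid monotone nonincreasing and hybrid supermodular and
`c ∈ ℝ`, then `(S, Λ) ↦ max (f(S,Λ) + g(S,Λ) - c) 0` is hybrid monotone
nonincreasing and hybrid supermodular. -/
theorem stmt11 {V : Type*} [DecidableEq V] [Fintype V] {n : ℕ} [DecidableEq (Fin n → ℝ)]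
    (D : Set (Fin n → ℝ)) (f g : Finset V → Finset (Fin n → ℝ) → ℝ) (c : ℝ)
    (hfm : HybMonoDecr D f) (hgm : HybMonoDecr D g)
    (hfs : HybSuper D f) (hgs : HybSuper D g) :
    HybMonoDecr D (fun S L => max (f S L + g S L - c) 0) ∧
    HybSuper D (fun S L => max (f S L + g S L - c) 0) := by
  refine ⟨fun S T L L' hST hLL hD => ?_, fun S T L L' j hST hLL hD hj => ?_,
    fun S T L L' lam hST hLL hD hlam hlamL => ?_⟩
  · exact max_le_max (by
      have := hfm S T L L' hST hLL hD
      have := hgm S T L L' hST hLL hD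
      linarith) le_rfl
  · -- discrete supermodularity
    have hLD : ↑L ⊆ D := (Finset.coe_subset.mpr hLL).trans hD
    apply key_max
    · -- f T L' + g T L' ≤ f S L + g S L
      have := hfm S T L L' hST hLL hD
      have := hgm S T L L' hST hLL hD
      linarith
    · -- f (insert j T) L' + g (insert j T) L' ≤ f (insert j S) L + g (insert j S) L
      have h1 := hfm (insert j S) (insert j T) L L' (Finset.insert_subset_insert _ hST) hLL hD
      have h2 := hgm (insert j S) (insert j T) L L' (Finset.insert_subset_insert _ hST) hLL hD
      linarith
    · -- f (insert j S) L + g (insert j S) L ≤ f S L + g S L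
      have h1 := hfm S (insert j S) L L (Finset.subset_insert _ _) le_rfl hLD
      have h2 := hgm S (insert j S) L L (Finset.subset_insert _ _) le_rfl hLD
      linarith
    · have h1 := hfm T (insert j T) L' L' (Finset.subset_insert _ _) le_rfl hD
      have h2 := hgm T (insert j T) L' L' (Finset.subset_insert _ _) le_rfl hD
      linarith
    · have h1 := hfs.1 S T L L' j hST hLL hD hj
      have h2 := hgs.1 S T L L' j hST hLL hD hj
      linarith
  · -- continuous supermodularity
    have hLD : ↑L ⊆ D := (Finset.coe_subset.mpr hLL).trans hD
    have hiLD : ↑(insert lam L) ⊆ D := by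
      rw [Finset.coe_insert]; exact Set.insert_subset hlam hLD
    have hiLD' : ↑(insert lam L') ⊆ D := by
      rw [Finset.coe_insert]; exact Set.insert_subset hlam hD
    apply key_max
    · have := hfm S T L L' hST hLL hD
      have := hgm S T L L' hST hLL hD
      linarith
    · have h1 := hfm S T (insert lam L) (insert lam L') hST
        (Finset.insert_subset_insert _ hLL) hiLD'
      have h2 := hgm S T (insert lam L) (insert lam L') hST
        (Finset.insert_subset_insert _ hLL) hiLD'
      linarith
    · have h1 := hfm S S L (insert lam L) le_rfl (Finset.subset_insert _ _) hiLD
      have h2 := hgm S S L (insert lam L) le_rfl (Finset.subset_insert _ _) hiLD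
      linarith
    · have h1 := hfm T T L' (insert lam L') le_rfl (Finset.subset_insert _ _) hiLD'
      have h2 := hgm T T L' (insert lam L') le_rfl (Finset.subset_insert _ _) hiLD'
      linarith
    · have h1 := hfs.2 S T L L' lam hST hLL hD hlam hlamL
      have h2 := hgs.2 S T L L' lam hST hLL hD hlam hlamL
      linarith
end

section
/- Local search 1/2-optimality: Let f : 2^V → ℝ≥0 be monotone nondecreasing and submodular with f(∅) = 0, and let M = (V, I) be a matroid. Suppose S is a basis of M such that for all v ∈ S and t ∈ V \ S with (S \ {v}) ∪ {t} ∈ I, we have f(S) ≥ f((S \ {v}) ∪ {t}). Then for every basis T of M, f(S) ≥ (1/2)·f(T). -/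
open Finset

section Aux

variable {V : Type*} [DecidableEq V]

/-- Any independent subset of `Y` has cardinality at most that of a maximal
independent subset of `Y`. -/
lemma aux_card_le (Ind : Finset V → Prop)
    (h_exch : ∀ S T : Finset V, Ind S → Ind T → S.card < T.card →
      ∃ v ∈ T \ S, Ind (insert v S))
    (Y A B : Finset V) (hA : Ind A) (hAY : A ⊆ Y) (hB : Ind B)
    (hBmax : ∀ x ∈ Y, x ∉ B → ¬ Ind (insert x B)) : A.card ≤ B.card := by
  by_contra h
  push_neg at h
  obtain ⟨v, hv, hvi⟩ := h_exch B A hB hA h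
  rw [Finset.mem_sdiff] at hv
  exact hBmax v (hAY hv.1) hv.2 hvi

/-- Any independent subset of `Y` extends to a maximal independent subset of `Y`. -/
lemma aux_extend (Ind : Finset V → Prop) (Y : Finset V) :
    ∀ n (A : Finset V), (Y \ A).card = n → A ⊆ Y → Ind A →
      ∃ B, A ⊆ B ∧ B ⊆ Y ∧ Ind B ∧ ∀ x ∈ Y, x ∉ B → ¬ Ind (insert x B) := by
  intro n
  induction n using Nat.strong_induction_on with
  | _ n ih =>
    intro A hcard hAY hA
    by_cases h : ∃ x ∈ Y, x ∉ A ∧ Ind (insert x A)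
    · obtain ⟨x, hxY, hxA, hxi⟩ := h
      have hsub : insert x A ⊆ Y := insert_subset hxY hAY
      have hlt : (Y \ insert x A).card < n := by
        rw [← hcard]
        apply Finset.card_lt_card
        constructor
        · exact Finset.sdiff_subset_sdiff le_rfl (Finset.subset_insert _ _)
        · intro hsub'
          have hx : x ∈ Y \ A := Finset.mem_sdiff.2 ⟨hxY, hxA⟩
          have := hsub' hx
          simp at this
      obtain ⟨B, h1, h2, h3, h4⟩ := ih _ hlt (insert x A) rfl hsub hxi
      exact ⟨B, (Finset.subset_insert _ _).trans h1, h2, h3, h4⟩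
    · push_neg at h
      exact ⟨A, subset_rfl, hAY, hA, fun x hx hxA => h x hx hxA⟩

/-- Submodular telescoping going up. -/
lemma aux_up (f : Finset V → ℝ)
    (hsub : ∀ S T : Finset V, ∀ v, S ⊆ T → v ∉ T →
      f (insert v T) - f T ≤ f (insert v S) - f S)
    (B : Finset V) (A : Finset V) :
    f (B ∪ A) - f B ≤ ∑ t ∈ A \ B, (f (insert t B) - f B) := by
  induction A using Finset.induction_on with
  | empty => simp
  | insert _ _ ha ih =>
    rename_i a A'
    by_cases haB : a ∈ B
    · have h1 : B ∪ insert a A' = B ∪ A' := by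
        rw [Finset.union_insert, Finset.insert_eq_self.2 (Finset.mem_union_left _ haB)]
      have h2 : (insert a A') \ B = A' \ B := Finset.insert_sdiff_of_mem _ haB
      rw [h1, h2]; exact ih
    · have h1 : B ∪ insert a A' = insert a (B ∪ A') := by
        rw [Finset.union_insert]
      have h2 : (insert a A') \ B = insert a (A' \ B) :=
        Finset.insert_sdiff_of_notMem _ haB
      have haBA : a ∉ B ∪ A' := by simp [haB, ha]
      have h3 := hsub B (B ∪ A') a Finset.subset_union_left haBA
      rw [h1, h2, Finset.sum_insert (by simp [ha])]
      linarith

/-- Submodular telescoping going down. -/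
lemma aux_down (f : Finset V → ℝ)
    (hsub : ∀ S T : Finset V, ∀ v, S ⊆ T → v ∉ T →
      f (insert v T) - f T ≤ f (insert v S) - f S)
    (S : Finset V) (W : Finset V) (hWS : W ⊆ S) :
    ∑ v ∈ W, (f S - f (S.erase v)) ≤ f S - f (S \ W) := by
  induction W using Finset.induction_on with
  | empty => simp
  | insert _ _ hw ih =>
    rename_i w W'
    have hWS' : W' ⊆ S := (Finset.subset_insert _ _).trans hWS
    have hwS : w ∈ S := hWS (Finset.mem_insert_self _ _)
    have hwW : w ∈ S \ W' := Finset.mem_sdiff.2 ⟨hwS, hw⟩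
    have h1 : S \ insert w W' = (S \ W').erase w := by
      ext x
      simp only [Finset.mem_sdiff, Finset.mem_insert, Finset.mem_erase, not_or]
      tauto
    have h2 := hsub (S \ insert w W') (S.erase w) w
      (by intro x hx; rw [h1] at hx; simp only [Finset.mem_erase, Finset.mem_sdiff] at hx ⊢
          exact ⟨hx.1, hx.2.1⟩)
      (Finset.notMem_erase _ _)
    rw [Finset.insert_erase hwS] at h2
    rw [h1] at h2 ⊢
    rw [Finset.insert_erase hwW] at h2
    rw [Finset.sum_insert hw]
    have := ih hWS'
    linarith

end Aux

/-- Local search 1/2-optimality for monotone submodular maximization over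
matroid bases: a swap-optimal basis `S` satisfies `f S ≥ f T / 2` for every
basis `T`. -/
theorem stmt12 {V : Type*} [DecidableEq V] [Fintype V]
    (Ind : Finset V → Prop)
    (h_empty : Ind ∅)
    (h_down : ∀ S T : Finset V, S ⊆ T → Ind T → Ind S)
    (h_exch : ∀ S T : Finset V, Ind S → Ind T → S.card < T.card →
      ∃ v ∈ T \ S, Ind (insert v S))
    (f : Finset V → ℝ)
    (hf0 : f ∅ = 0) (hnn : ∀ S : Finset V, 0 ≤ f S)
    (hmono : ∀ S T : Finset V, S ⊆ T → f S ≤ f T)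
    (hsub : ∀ S T : Finset V, ∀ v, S ⊆ T → v ∉ T →
      f (insert v T) - f T ≤ f (insert v S) - f S)
    (S : Finset V)
    (hSbasis : Ind S ∧ ∀ T : Finset V, Ind T → S ⊆ T → T = S)
    (hlocal : ∀ v ∈ S, ∀ t : V, t ∉ S → Ind (insert t (S.erase v)) →
      f (insert t (S.erase v)) ≤ f S)
    (T : Finset V)
    (hTbasis : Ind T ∧ ∀ T' : Finset V, Ind T' → T ⊆ T' → T' = T) :
    f T / 2 ≤ f S := by
  classical
  obtain ⟨hS, hSmax⟩ := hSbasis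
  obtain ⟨hT, _⟩ := hTbasis
  -- the candidate swap sets
  set D : V → Finset V := fun t => S.filter (fun v => Ind (insert t (S.erase v))) with hD
  have hDS : ∀ t, D t ⊆ S := fun t => Finset.filter_subset _ _
  -- S is maximal independent in S ∪ {t} for t ∉ S
  have hSmax' : ∀ t, t ∉ S → ¬ Ind (insert t S) := by
    intro t htS hcon
    have := hSmax (insert t S) hcon (Finset.subset_insert _ _)
    exact htS (this ▸ Finset.mem_insert_self t S)
  -- the "fundamental circuit" is dependent
  have hdep : ∀ t, t ∉ S → ¬ Ind (insert t (D t)) := by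
    intro t htS hcon
    have hsub1 : insert t (D t) ⊆ S ∪ {t} := by
      intro x hx
      rcases Finset.mem_insert.1 hx with h | h
      · simp [h]
      · exact Finset.mem_union_left _ (hDS t h)
    obtain ⟨B, hB1, hB2, hB3, hB4⟩ :=
      aux_extend Ind (S ∪ {t}) _ (insert t (D t)) rfl hsub1 hcon
    -- S is maximal in S ∪ {t}
    have hSm : ∀ x ∈ S ∪ {t}, x ∉ S → ¬ Ind (insert x S) := by
      intro x hx hxS
      rcases Finset.mem_union.1 hx with h | h
      · exact absurd h hxS
      · rw [Finset.mem_singleton.1 h]; exact hSmax' t htS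
    have hcard1 : B.card ≤ S.card :=
      aux_card_le Ind h_exch (S ∪ {t}) B S hB3 hB2 hS hSm
    have hcard2 : S.card ≤ B.card :=
      aux_card_le Ind h_exch (S ∪ {t}) S B hS Finset.subset_union_left hB3 hB4
    have hcard : B.card = S.card := le_antisymm hcard1 hcard2
    have htB : t ∈ B := hB1 (Finset.mem_insert_self _ _)
    have hBe : B.erase t ⊆ S := by
      intro x hx
      rw [Finset.mem_erase] at hx
      rcases Finset.mem_union.1 (hB2 hx.2) with h | h
      · exact h
      · exact absurd (Finset.mem_singleton.1 h) hx.1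
    have hScard : 1 ≤ S.card := by
      rw [← hcard]
      exact Finset.card_pos.2 ⟨t, htB⟩
    have hcarde : (B.erase t).card = S.card - 1 := by
      rw [Finset.card_erase_of_mem htB, hcard]
    have hone : (S \ B.erase t).card = 1 := by
      rw [Finset.card_sdiff_of_subset hBe, hcarde]
      omega
    obtain ⟨w, hw⟩ := Finset.card_eq_one.1 hone
    have hwS : w ∈ S := by
      have : w ∈ S \ B.erase t := hw ▸ Finset.mem_singleton_self w
      exact (Finset.mem_sdiff.1 this).1
    have hwB : w ∉ B.erase t := by
      have : w ∈ S \ B.erase t := hw ▸ Finset.mem_singleton_self w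
      exact (Finset.mem_sdiff.1 this).2
    have hBsub : B.erase t ⊆ S.erase w := by
      intro x hx
      refine Finset.mem_erase.2 ⟨?_, hBe hx⟩
      rintro rfl; exact hwB hx
    have hBeq : B.erase t = S.erase w := by
      apply Finset.eq_of_subset_of_card_le hBsub
      rw [Finset.card_erase_of_mem hwS, hcarde]
    have hwD : w ∈ D t := by
      rw [hD]
      refine Finset.mem_filter.2 ⟨hwS, ?_⟩
      rw [← hBeq, Finset.insert_erase htB]
      exact hB3
    have hwB' : w ∈ B := hB1 (Finset.mem_insert_of_mem hwD)
    have : w ∈ B.erase t := Finset.mem_erase.2 ⟨fun h => htS (h ▸ hwS), hwB'⟩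
    exact hwB this
  -- Hall's condition
  have hall : ∀ X : Finset {x // x ∈ T \ S}, X.card ≤ (X.biUnion fun x => D x.val).card := by
    intro X
    set N : Finset V := X.biUnion (fun x => D x.val) with hN
    set X' : Finset V := X.image Subtype.val with hX'
    have hNS : N ⊆ S := Finset.biUnion_subset.2 fun x _ => hDS _
    have hNind : Ind N := h_down N S hNS hS
    have hX'T : X' ⊆ T := by
      intro x hx
      obtain ⟨y, _, rfl⟩ := Finset.mem_image.1 hx
      exact (Finset.mem_sdiff.1 y.2).1
    have hX'ind : Ind X' := h_down X' T hX'T hT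
    have hX'sub : X' ⊆ N ∪ X' := Finset.subset_union_right
    have hNmax : ∀ x ∈ N ∪ X', x ∉ N → ¬ Ind (insert x N) := by
      intro x hx hxN hcon
      rcases Finset.mem_union.1 hx with h | h
      · exact hxN h
      · obtain ⟨y, hy, rfl⟩ := Finset.mem_image.1 h
        have hxS : (y : V) ∉ S := (Finset.mem_sdiff.1 y.2).2
        have hDN : D y.val ⊆ N := by
          rw [hN]; exact Finset.subset_biUnion_of_mem (fun x : {x // x ∈ T \ S} => D x.val) hy
        have : Ind (insert y.val (D y.val)) :=
          h_down _ _ (Finset.insert_subset_insert _ hDN) hcon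
        exact hdep y.val hxS this
    have h1 : X'.card ≤ N.card :=
      aux_card_le Ind h_exch (N ∪ X') X' N hX'ind hX'sub hNind hNmax
    have h2 : X.card = X'.card :=
      (Finset.card_image_of_injective _ Subtype.val_injective).symm
    rw [h2]; exact h1
  obtain ⟨g, hginj, hgmem⟩ :=
    (Finset.all_card_le_biUnion_card_iff_exists_injective (fun x : {x // x ∈ T \ S} => D x.val)).1
      hall
  -- properties of g
  have hgS : ∀ x : {x // x ∈ T \ S}, g x ∈ S := fun x => hDS _ (hgmem x)
  have hgind : ∀ x : {x // x ∈ T \ S}, Ind (insert x.val (S.erase (g x))) := by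
    intro x
    exact (Finset.mem_filter.1 (hgmem x)).2
  -- the chain of inequalities
  have step1 : f T ≤ f (S ∪ T) := hmono _ _ Finset.subset_union_right
  have step2 : f (S ∪ T) - f S ≤ ∑ t ∈ T \ S, (f (insert t S) - f S) :=
    aux_up f hsub S T
  have step3 : ∑ t ∈ T \ S, (f (insert t S) - f S)
      = ∑ x ∈ (T \ S).attach, (f (insert x.val S) - f S) :=
    (Finset.sum_attach _ _).symm
  have step4 : ∑ x ∈ (T \ S).attach, (f (insert x.val S) - f S)
      ≤ ∑ x ∈ (T \ S).attach, (f S - f (S.erase (g x))) := by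
    apply Finset.sum_le_sum
    intro x _
    have hxS : (x : V) ∉ S := (Finset.mem_sdiff.1 x.2).2
    have h1 := hsub (S.erase (g x)) S x.val (Finset.erase_subset _ _) hxS
    have h2 := hlocal (g x) (hgS x) x.val hxS (hgind x)
    linarith
  set W : Finset V := ((T \ S).attach).image g with hW
  have step5 : ∑ x ∈ (T \ S).attach, (f S - f (S.erase (g x)))
      = ∑ v ∈ W, (f S - f (S.erase v)) := by
    rw [hW]; exact (Finset.sum_image (f := fun v => f S - f (S.erase v)) (fun x _ y _ h => hginj h)).symm
  have hWS : W ⊆ S := by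
    intro v hv
    obtain ⟨x, _, rfl⟩ := Finset.mem_image.1 hv
    exact hgS x
  have step6 : ∑ v ∈ W, (f S - f (S.erase v)) ≤ f S - f (S \ W) :=
    aux_down f hsub S W hWS
  have step7 : 0 ≤ f (S \ W) := hnn _
  linarith
end

section
/- Exchange property for matroid bases: if S and T are two bases of a matroid M = (V, I), then there exists a bijection π : T \ S → S \ T such that for every t ∈ T \ S, the set (S \ {π(t)}) ∪ {t} is a basis of M. -/
/-- Bijective exchange property for matroid bases: for bases `S`, `T` there is
a bijection `π : T \ S → S \ T` such that `(S \ {π t}) ∪ {t}` is a basis for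
every `t ∈ T \ S`. -/
theorem stmt13 {V : Type*} [DecidableEq V] [Fintype V]
    (Ind : Finset V → Prop)
    (h_empty : Ind ∅)
    (h_down : ∀ S T : Finset V, S ⊆ T → Ind T → Ind S)
    (h_exch : ∀ S T : Finset V, Ind S → Ind T → S.card < T.card →
      ∃ v ∈ T \ S, Ind (insert v S))
    (S T : Finset V)
    (hS : Ind S ∧ ∀ T' : Finset V, Ind T' → S ⊆ T' → T' = S)
    (hT : Ind T ∧ ∀ T' : Finset V, Ind T' → T ⊆ T' → T' = T) :
    ∃ π : {x // x ∈ T \ S} ≃ {x // x ∈ S \ T},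
      ∀ t : {x // x ∈ T \ S},
        Ind (insert t.1 (S.erase (π t).1)) ∧
        ∀ T' : Finset V, Ind T' → insert t.1 (S.erase (π t).1) ⊆ T' →
          T' = insert t.1 (S.erase (π t).1) := by
  classical
  obtain ⟨hSI, hSmax⟩ := hS
  obtain ⟨hTI, hTmax⟩ := hT
  -- every independent set has card ≤ S.card
  have hle : ∀ I : Finset V, Ind I → I.card ≤ S.card := by
    intro I hI
    by_contra h
    push_neg at h
    obtain ⟨v, hv, hins⟩ := h_exch S I hSI hI h
    rw [Finset.mem_sdiff] at hv
    have heq := hSmax (insert v S) hins (Finset.subset_insert _ _)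
    exact hv.2 (heq ▸ Finset.mem_insert_self v S)
  have hleT : ∀ I : Finset V, Ind I → I.card ≤ T.card := by
    intro I hI
    by_contra h
    push_neg at h
    obtain ⟨v, hv, hins⟩ := h_exch T I hTI hI h
    rw [Finset.mem_sdiff] at hv
    have heq := hTmax (insert v T) hins (Finset.subset_insert _ _)
    exact hv.2 (heq ▸ Finset.mem_insert_self v T)
  have hcardST : T.card = S.card := le_antisymm (hle T hTI) (hleT S hSI)
  -- extension lemma
  have hext : ∀ n (I : Finset V), Ind I → I.card + n = S.card →
      ∃ B, Ind B ∧ I ⊆ B ∧ B ⊆ I ∪ S ∧ B.card = S.card := by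
    intro n
    induction n with
    | zero =>
      intro I hI hcard
      exact ⟨I, hI, Finset.Subset.refl I, Finset.subset_union_left, by omega⟩
    | succ k ih =>
      intro I hI hcard
      obtain ⟨v, hv, hins⟩ := h_exch I S hI hSI (by omega)
      rw [Finset.mem_sdiff] at hv
      obtain ⟨B, hB1, hB2, hB3, hB4⟩ := ih (insert v I) hins
        (by rw [Finset.card_insert_of_notMem hv.2]; omega)
      refine ⟨B, hB1, (Finset.subset_insert _ _).trans hB2, ?_, hB4⟩
      intro x hx
      rcases Finset.mem_union.mp (hB3 hx) with h | h
      · rcases Finset.mem_insert.mp h with h | h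
        · exact Finset.mem_union_right _ (h ▸ hv.1)
        · exact Finset.mem_union_left _ h
      · exact Finset.mem_union_right _ h
  -- neighborhoods
  set nbr : {x // x ∈ T \ S} → Finset V :=
    fun t => (S \ T).filter (fun s => Ind (insert t.1 (S.erase s))) with hnbr
  -- Hall's condition
  have hall : ∀ A : Finset {x // x ∈ T \ S}, A.card ≤ (A.biUnion nbr).card := by
    intro A
    set A' := A.image Subtype.val with hA'
    have hA'card : A'.card = A.card :=
      Finset.card_image_of_injective _ Subtype.val_injective
    have hA'sub : A' ⊆ T \ S := by
      intro x hx
      rw [hA', Finset.mem_image] at hx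
      obtain ⟨t, _, rfl⟩ := hx
      exact t.2
    set I0 : Finset V := (S ∩ T) ∪ A' with hI0def
    have hI0T : I0 ⊆ T := by
      intro x hx
      rcases Finset.mem_union.mp hx with h | h
      · exact (Finset.mem_inter.mp h).2
      · exact (Finset.mem_sdiff.mp (hA'sub h)).1
    have hI0 : Ind I0 := h_down _ T hI0T hTI
    have hI0card : I0.card ≤ S.card := hle _ hI0
    obtain ⟨B, hBI, hB1, hB2, hBcard⟩ := hext (S.card - I0.card) I0 hI0 (by omega)
    have hA'B : A' ⊆ B := fun x hx => hB1 (Finset.mem_union_right _ hx)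
    have hA'S : ∀ x ∈ A', x ∉ S := fun x hx => (Finset.mem_sdiff.mp (hA'sub hx)).2
    -- S \ B is inside the neighborhood union
    have key : S \ B ⊆ A.biUnion nbr := by
      intro s hs
      rw [Finset.mem_sdiff] at hs
      have hse : Ind (S.erase s) := h_down _ S (Finset.erase_subset _ _) hSI
      have hcl : (S.erase s).card < B.card := by
        rw [hBcard, Finset.card_erase_of_mem hs.1]
        have := Finset.card_pos.mpr ⟨s, hs.1⟩
        omega
      obtain ⟨v, hv, hins⟩ := h_exch _ B hse hBI hcl
      rw [Finset.mem_sdiff] at hv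
      have hvS : v ∉ S := by
        intro hvs
        have hveq : v = s := by
          by_contra hne
          exact hv.2 (Finset.mem_erase.mpr ⟨hne, hvs⟩)
        exact hs.2 (hveq ▸ hv.1)
      have hvA' : v ∈ A' := by
        rcases Finset.mem_union.mp (hB2 hv.1) with h | h
        · rcases Finset.mem_union.mp h with h | h
          · exact absurd (Finset.mem_inter.mp h).1 hvS
          · exact h
        · exact absurd h hvS
      rw [hA', Finset.mem_image] at hvA'
      obtain ⟨t, htA, htv⟩ := hvA'
      refine Finset.mem_biUnion.mpr ⟨t, htA, ?_⟩
      rw [hnbr]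
      have hsT : s ∉ T := by
        intro h
        exact hs.2 (hB1 (Finset.mem_union_left _ (Finset.mem_inter.mpr ⟨hs.1, h⟩)))
      simp only [Finset.mem_filter, Finset.mem_sdiff]
      exact ⟨⟨hs.1, hsT⟩, by rw [htv]; exact hins⟩
    -- counting
    have hBS : B \ S = A' := by
      apply Finset.Subset.antisymm
      · intro x hx
        rw [Finset.mem_sdiff] at hx
        rcases Finset.mem_union.mp (hB2 hx.1) with h | h
        · rcases Finset.mem_union.mp h with h | h
          · exact absurd (Finset.mem_inter.mp h).1 hx.2
          · exact h
        · exact absurd h hx.2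
      · intro x hx
        exact Finset.mem_sdiff.mpr ⟨hA'B hx, hA'S x hx⟩
    have h1 : (B \ S).card + (B ∩ S).card = B.card := Finset.card_sdiff_add_card_inter B S
    have h2 : (S \ B).card + (S ∩ B).card = S.card := Finset.card_sdiff_add_card_inter S B
    have h3 : (S ∩ B).card = (B ∩ S).card := by rw [Finset.inter_comm]
    have h4 : (S \ B).card = A.card := by
      rw [hBS, hA'card] at h1
      omega
    calc A.card = (S \ B).card := h4.symm
      _ ≤ (A.biUnion nbr).card := Finset.card_le_card key
  obtain ⟨f, hfinj, hf⟩ := (Finset.all_card_le_biUnion_card_iff_exists_injective nbr).mp hall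
  have hfmem : ∀ t, f t ∈ S \ T ∧ Ind (insert t.1 (S.erase (f t))) := by
    intro t
    have := hf t
    rw [hnbr, Finset.mem_filter] at this
    exact this
  set g : {x // x ∈ T \ S} → {x // x ∈ S \ T} := fun t => ⟨f t, (hfmem t).1⟩ with hg
  have hginj : Function.Injective g := by
    intro a b hab
    exact hfinj (congrArg Subtype.val hab)
  have hcards : Fintype.card {x // x ∈ T \ S} = Fintype.card {x // x ∈ S \ T} := by
    rw [Fintype.card_coe, Fintype.card_coe]
    exact Finset.card_sdiff_comm hcardST
  have hgbij : Function.Bijective g :=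
    (Fintype.bijective_iff_injective_and_card g).mpr ⟨hginj, hcards⟩
  refine ⟨Equiv.ofBijective g hgbij, ?_⟩
  intro t
  have hmem := hfmem t
  have hπ : ((Equiv.ofBijective g hgbij) t).1 = f t := rfl
  rw [hπ]
  refine ⟨hmem.2, ?_⟩
  -- maximality
  have htS : t.1 ∉ S := (Finset.mem_sdiff.mp t.2).2
  have hftS : f t ∈ S := (Finset.mem_sdiff.mp hmem.1).1
  have hcard : (insert t.1 (S.erase (f t))).card = S.card := by
    rw [Finset.card_insert_of_notMem (fun h => htS (Finset.erase_subset _ _ h)),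
      Finset.card_erase_of_mem hftS]
    have := Finset.card_pos.mpr ⟨f t, hftS⟩
    omega
  intro T' hT'I hsub
  exact (Finset.eq_of_subset_of_card_le hsub (by rw [hcard]; exact hle T' hT'I)).symm
end
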